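/- In a connected graph Σ of girth 2d+1 and diameter d ≥ 2, and an edge e of Σ, the number of vertices of Σ at subdivision-graph distance 2i−1 from e equals 2(k−1)^{i−1} for 1 ≤ i ≤ d, where k is the (regular) valency of Σ. -/

import Mathlib

open SimpleGraph Sum

variable {V : Type*}

/-- The subdivision graph of a simple graph: vertices are original vertices plus edges,
with adjacency given by incidence. -/
def SimpleGraph.subdivision (G : SimpleGraph V) : SimpleGraph (V ⊕ G.edgeSet) where
  Adj a b :=
    match a, b with
    | Sum.inl x, Sum.inr e => x ∈ (e : Sym2 V)
    | Sum.inr e, Sum.inl x => x ∈ (e : Sym2 V)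
    | _, _ => False
  symm := by
    constructor
    rintro (x | e) (y | f) h <;> simp_all
  loopless := by
    constructor
    rintro (x | e) h <;> simp_all

/-!
Seen from the edge `e = xy`, a vertex `v` lies at distance `2 * min (d x v) (d y v) + 1` in the
subdivision graph, so the sphere consists of the vertices whose nearer end of `e` is at distance
`j = i - 1`. As `2j + 1` is less than the girth, no such vertex is equidistant from `x` and `y`,
and the sphere splits into the layer `{v | d x v = j, d y v = j + 1}` and its mirror image. The
layers grow like a `(k - 1)`-ary tree: a vertex of the next layer has a unique neighbour in the
previous one (two would close a cycle of length at most `2j + 4`), and a vertex of a layer has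
exactly `k - 1` neighbours in the next one (one neighbour is its parent, and an edge inside a
sphere around `y` would close an odd cycle shorter than the girth).
-/

namespace SimpleGraph

variable {G : SimpleGraph V}

theorem Walk.IsPath.girth_le_length_add_length {a b : V} {p q : G.Walk a b}
    (hp : p.IsPath) (hq : q.IsPath) (hne : p ≠ q) : G.girth ≤ p.length + q.length := by
  classical
  let H : SimpleGraph V := fromEdgeSet {e | e ∈ p.edges ∨ e ∈ q.edges}
  have hHG : H ≤ G := fun u v huv => huv.1.elim p.adj_of_mem_edges q.adj_of_mem_edges
  have hpH : ∀ e ∈ p.edges, e ∈ H.edgeSet := fun e he => by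
    rw [edgeSet_fromEdgeSet]
    exact ⟨Or.inl he, G.not_isDiag_of_mem_edgeSet (p.edges_subset_edgeSet he)⟩
  have hqH : ∀ e ∈ q.edges, e ∈ H.edgeSet := fun e he => by
    rw [edgeSet_fromEdgeSet]
    exact ⟨Or.inr he, G.not_isDiag_of_mem_edgeSet (q.edges_subset_edgeSet he)⟩
  have hH : ¬ H.IsAcyclic := fun hacyc => hne <| by
    have := congrArg Subtype.val <| (isAcyclic_iff_subsingleton_path.mp hacyc a b).elim
      ⟨p.transfer H hpH, hp.transfer hpH⟩ ⟨q.transfer H hqH, hq.transfer hqH⟩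
    have := congrArg (fun r : H.Walk a b => r.transfer G fun e he =>
      edgeSet_mono hHG (r.edges_subset_edgeSet he)) this
    simpa only [Walk.transfer_transfer, Walk.transfer_self] using this
  obtain ⟨c, w, hw, -⟩ := exists_girth_eq_length.mpr hH
  have hwpq : w.edges ⊆ p.edges ++ q.edges := fun e he => by
    simpa [H] using (edgeSet_fromEdgeSet _ ▸ w.edges_subset_edgeSet he).1
  calc G.girth ≤ (w.mapLe hHG).length := girth_le_length (hw.mapLe hHG)
    _ = w.edges.length := by rw [Walk.length_mapLe, Walk.length_edges]
    _ ≤ (p.edges ++ q.edges).length := (List.subperm_of_subset hw.edges_nodup hwpq).length_le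
    _ = p.length + q.length := by simp

theorem Adj.dist_le_dist_add_one {u w : V} (h : G.Adj u w) (a : V) :
    G.dist a w ≤ G.dist a u + 1 := by
  simpa [dist_eq_one_iff_adj.mpr h] using h.reachable.dist_triangle_right a

theorem Walk.dist_add_dist_le_length {a b w : V} (p : G.Walk a b) (hw : w ∈ p.support) :
    G.dist a w + G.dist w b ≤ p.length := by
  classical
  calc G.dist a w + G.dist w b ≤ (p.takeUntil w hw).length + (p.dropUntil w hw).length :=
        add_le_add (dist_le _) (dist_le _)
    _ = p.length := by rw [← Walk.length_append, p.take_spec hw]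

theorem exists_adj_dist_eq_of_dist_eq_succ {a v : V} {n : ℕ} (hv : G.dist a v = n + 1) :
    ∃ w, G.Adj w v ∧ G.dist a w = n := by
  obtain ⟨p, hp⟩ := exists_walk_of_dist_ne_zero (G := G) (u := a) (v := v) (by omega)
  have hnil : ¬ p.Nil := by rw [Walk.not_nil_iff_lt_length]; omega
  refine ⟨p.penultimate, p.adj_penultimate hnil, le_antisymm ?_ ?_⟩
  · have := dist_le p.dropLast
    rw [Walk.length_dropLast] at this
    omega
  · have := (p.adj_penultimate hnil).dist_le_dist_add_one a
    omega

theorem Connected.dist_ne_of_adj (hconn : G.Connected) {a u w : V} (h : G.Adj u w)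
    (hg : 2 * G.dist a u + 1 < G.girth) : G.dist a u ≠ G.dist a w := by
  intro hdist
  obtain ⟨p, hp, hpl⟩ := hconn.exists_path_of_dist a u
  obtain ⟨q, hq, hql⟩ := hconn.exists_path_of_dist a w
  have hu : u ∉ q.support := fun hu => by
    have := q.dist_add_dist_le_length hu
    have := hconn.pos_dist_of_ne h.ne
    omega
  have hne : p ≠ q.concat h.symm := fun hpq => by
    have := congrArg Walk.length hpq
    rw [Walk.length_concat] at this
    omega
  have := hp.girth_le_length_add_length (hq.concat hu h.symm) hne
  rw [Walk.length_concat, hpl, hql, ← hdist] at this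
  omega

theorem Connected.eq_of_adj_of_dist_eq (hconn : G.Connected) {a v w₁ w₂ : V} {n : ℕ}
    (h₁ : G.Adj w₁ v) (h₂ : G.Adj w₂ v) (hv : G.dist a v = n + 1)
    (hw₁ : G.dist a w₁ = n) (hw₂ : G.dist a w₂ = n) (hg : 2 * n + 2 < G.girth) : w₁ = w₂ := by
  obtain ⟨p₁, hp₁, hpl₁⟩ := hconn.exists_path_of_dist a w₁
  obtain ⟨p₂, hp₂, hpl₂⟩ := hconn.exists_path_of_dist a w₂
  have hv₁ : v ∉ p₁.support := fun hv₁ => by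
    have := p₁.dist_add_dist_le_length hv₁
    omega
  have hv₂ : v ∉ p₂.support := fun hv₂ => by
    have := p₂.dist_add_dist_le_length hv₂
    omega
  by_contra hne
  have hpq : p₁.concat h₁ ≠ p₂.concat h₂ := fun hpq => hne (Walk.concat_inj hpq).1
  have := (hp₁.concat hv₁ h₁).girth_le_length_add_length (hp₂.concat hv₂ h₂) hpq
  rw [Walk.length_concat, Walk.length_concat, hpl₁, hpl₂, hw₁, hw₂] at this
  omega

section Counting

variable [Fintype V] [DecidableRel G.Adj] {k : ℕ}

open Finset

theorem card_filter_neighborFinset_dist_eq (hconn : G.Connected) (hreg : G.IsRegularOfDegree k)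
    {a u : V} {n : ℕ} (hu : G.dist a u = n + 1) (hg : 2 * n + 3 < G.girth) :
    #{w ∈ G.neighborFinset u | G.dist a w = n + 2} = k - 1 := by
  obtain ⟨w₀, hw₀u, hw₀⟩ := exists_adj_dist_eq_of_dist_eq_succ hu
  have hparent : {w ∈ G.neighborFinset u | ¬ G.dist a w = n + 2} = {w₀} := by
    ext w
    simp only [mem_filter, mem_neighborFinset, mem_singleton]
    constructor
    · rintro ⟨huw, hw⟩
      have hne := hconn.dist_ne_of_adj (a := a) huw (by omega)
      have := huw.dist_le_dist_add_one a
      have := huw.symm.dist_le_dist_add_one a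
      exact hconn.eq_of_adj_of_dist_eq huw.symm hw₀u hu (by omega) hw₀ (by omega)
    · rintro rfl
      exact ⟨hw₀u.symm, by omega⟩
  have := card_filter_add_card_filter_not (s := G.neighborFinset u) (fun w => G.dist a w = n + 2)
  rw [hparent, card_neighborFinset_eq_degree, hreg u, card_singleton] at this
  omega

theorem card_biUnion_filter_neighborFinset_dist_eq [DecidableEq V] (hconn : G.Connected)
    (hreg : G.IsRegularOfDegree k) {a : V} {n : ℕ} {T : Finset V}
    (hT : ∀ u ∈ T, G.dist a u = n + 1) (hg : 2 * n + 4 < G.girth) :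
    #(T.biUnion fun u => {w ∈ G.neighborFinset u | G.dist a w = n + 2}) = #T * (k - 1) := by
  rw [card_biUnion, sum_const_nat fun u hu =>
    card_filter_neighborFinset_dist_eq hconn hreg (hT u hu) (by omega)]
  intro u₁ hu₁ u₂ hu₂ hne
  rw [Function.onFun, Finset.disjoint_left]
  intro w hw₁ hw₂
  simp only [mem_filter, mem_neighborFinset] at hw₁ hw₂
  obtain ⟨h₁, hw⟩ := hw₁
  obtain ⟨h₂, -⟩ := hw₂
  exact hne (hconn.eq_of_adj_of_dist_eq h₁ h₂ hw (hT u₁ hu₁) (hT u₂ hu₂) (by omega))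

theorem filter_dist_eq_succ_eq_biUnion [DecidableEq V] {x y : V} (hxy : G.Adj x y) (j : ℕ) :
    ({v | G.dist x v = j + 1 ∧ G.dist y v = j + 2} : Finset V) =
      ({v | G.dist x v = j ∧ G.dist y v = j + 1} : Finset V).biUnion
        fun u => {w ∈ G.neighborFinset u | G.dist y w = j + 2} := by
  have hyx : ∀ v, G.dist y v ≤ G.dist x v + 1 := fun v => by
    simpa [dist_eq_one_iff_adj.mpr hxy.symm, add_comm] using
      hxy.symm.reachable.dist_triangle_left v
  ext v
  simp only [mem_biUnion, mem_filter, mem_univ, true_and, mem_neighborFinset]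
  constructor
  · rintro ⟨hxv, hyv⟩
    obtain ⟨u, huv, hxu⟩ := exists_adj_dist_eq_of_dist_eq_succ hxv
    have := huv.dist_le_dist_add_one y
    have := hyx u
    exact ⟨u, ⟨hxu, by omega⟩, huv, hyv⟩
  · rintro ⟨u, ⟨hxu, -⟩, huv, hyv⟩
    have := huv.dist_le_dist_add_one x
    have := hyx v
    exact ⟨by omega, hyv⟩

theorem card_filter_dist_eq_dist_succ [DecidableEq V] (hconn : G.Connected)
    (hreg : G.IsRegularOfDegree k) {x y : V} (hxy : G.Adj x y) {j : ℕ}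
    (hg : 2 * j + 2 < G.girth) :
    #({v | G.dist x v = j ∧ G.dist y v = j + 1} : Finset V) = (k - 1) ^ j := by
  induction j with
  | zero =>
    have hx : ({v | G.dist x v = 0 ∧ G.dist y v = 1} : Finset V) = {x} := by
      ext v
      simp only [mem_filter, mem_univ, true_and, mem_singleton, hconn.dist_eq_zero_iff,
        dist_eq_one_iff_adj]
      exact ⟨fun h => h.1.symm, by rintro rfl; exact ⟨rfl, hxy.symm⟩⟩
    rw [hx, card_singleton, pow_zero]
  | succ j ih =>
    rw [filter_dist_eq_succ_eq_biUnion hxy, card_biUnion_filter_neighborFinset_dist_eq hconn hreg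
      (fun u hu => (mem_filter.mp hu).2.2) (by omega), ih (by omega), pow_succ]

theorem card_filter_min_dist_eq [DecidableEq V] (hconn : G.Connected)
    (hreg : G.IsRegularOfDegree k) {x y : V} (hxy : G.Adj x y) {j : ℕ}
    (hg : 2 * j + 2 < G.girth) :
    #({v | min (G.dist x v) (G.dist y v) = j} : Finset V) = 2 * (k - 1) ^ j := by
  have hsplit : ({v | min (G.dist x v) (G.dist y v) = j} : Finset V) =
      ({v | G.dist x v = j ∧ G.dist y v = j + 1} : Finset V) ∪
        ({v | G.dist y v = j ∧ G.dist x v = j + 1} : Finset V) := by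
    rw [← filter_or]
    refine filter_congr fun v _ => ?_
    have := hxy.dist_le_dist_add_one v
    have := hxy.symm.dist_le_dist_add_one v
    have := hconn.dist_ne_of_adj (a := v) hxy
    rw [dist_comm (u := x), dist_comm (u := y)]
    omega
  rw [hsplit, card_union_of_disjoint (disjoint_filter.mpr fun v _ h h' => by omega),
    card_filter_dist_eq_dist_succ hconn hreg hxy hg,
    card_filter_dist_eq_dist_succ hconn hreg hxy.symm hg, two_mul]

end Counting

theorem Walk.le_add_length_of_adj_le {W : Type*} {H : SimpleGraph W} {φ : W → ℕ}
    (hφ : ∀ ⦃s t⦄, H.Adj s t → φ s ≤ φ t + 1) {s t : W} (p : H.Walk s t) :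
    φ s ≤ φ t + p.length := by
  induction p with
  | nil => simp
  | cons h _ ih =>
    have := hφ h
    rw [Walk.length_cons]
    omega

@[simp]
theorem subdivision_adj_inl_inr {a : V} {f : G.edgeSet} :
    G.subdivision.Adj (inl a) (inr f) ↔ a ∈ (f : Sym2 V) := Iff.rfl

@[simp]
theorem subdivision_adj_inr_inl {a : V} {f : G.edgeSet} :
    G.subdivision.Adj (inr f) (inl a) ↔ a ∈ (f : Sym2 V) := Iff.rfl

theorem exists_subdivision_walk_length_eq {a b : V} (p : G.Walk a b) :
    ∃ q : G.subdivision.Walk (inl a) (inl b), q.length = 2 * p.length := by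
  induction p with
  | nil => exact ⟨.nil, rfl⟩
  | @cons a c b h _ ih =>
    obtain ⟨q, hq⟩ := ih
    exact ⟨.cons (v := inr ⟨s(a, c), h⟩) (subdivision_adj_inl_inr.mpr (Sym2.mem_mk_left a c))
      (.cons (subdivision_adj_inr_inl.mpr (Sym2.mem_mk_right a c)) q),
      by rw [Walk.length_cons, Walk.length_cons, hq, Walk.length_cons]; ring⟩

theorem subdivision_dist_inr_inl (hconn : G.Connected) {x y : V} (hxy : G.Adj x y) (v : V) :
    G.subdivision.dist (inr ⟨s(x, y), hxy⟩) (inl v) = 2 * min (G.dist x v) (G.dist y v) + 1 := by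
  have hwalk : ∀ c ∈ s(x, y), ∃ q : G.subdivision.Walk (inr ⟨s(x, y), hxy⟩) (inl v),
      q.length = 2 * G.dist c v + 1 := fun c hc => by
    obtain ⟨p, hp⟩ := hconn.exists_walk_length_eq_dist c v
    obtain ⟨q, hq⟩ := exists_subdivision_walk_length_eq p
    exact ⟨.cons (subdivision_adj_inr_inl.mpr hc) q, by rw [Walk.length_cons, hq, hp]⟩
  obtain ⟨qx, hqx⟩ := hwalk x (Sym2.mem_mk_left x y)
  obtain ⟨qy, hqy⟩ := hwalk y (Sym2.mem_mk_right x y)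
  let φ : V ⊕ G.edgeSet → ℕ :=
    Sum.elim (fun u => 2 * G.dist v u) (fun f => 2 * ((f : Sym2 V).map (G.dist v)).inf + 1)
  have hφ : ∀ ⦃s t⦄, G.subdivision.Adj s t → φ s ≤ φ t + 1 := by
    rintro (u | ⟨⟨a, b⟩, hab⟩) (u' | ⟨⟨a', b'⟩, hab'⟩) h <;> try exact h.elim
    · have hab' : G.Adj a' b' := hab'
      have := hab'.dist_le_dist_add_one v
      have := hab'.symm.dist_le_dist_add_one v
      rcases Sym2.mem_iff.mp h with rfl | rfl <;>
        simp only [φ, Sum.elim_inl, Sum.elim_inr, Sym2.map_mk, Sym2.inf_mk] <;> omega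
    · rcases Sym2.mem_iff.mp h with rfl | rfl <;>
        simp only [φ, Sum.elim_inl, Sum.elim_inr, Sym2.map_mk, Sym2.inf_mk] <;> omega
  obtain ⟨q, hq⟩ := (Walk.reachable qx).exists_walk_length_eq_dist
  have hlower := Walk.le_add_length_of_adj_le hφ q
  have hqx_le := dist_le qx
  have hqy_le := dist_le qy
  simp only [φ, Sum.elim_inl, Sum.elim_inr, Sym2.map_mk, Sym2.inf_mk, dist_self] at hlower
  rw [dist_comm (u := v), dist_comm (u := v)] at hlower
  omega

end SimpleGraph

theorem subdivision_sphere_card_general [Fintype V] (G : SimpleGraph V) [DecidableRel G.Adj]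
    (hconn : G.Connected) (k d : ℕ)
    (hreg : G.IsRegularOfDegree k) (hgirth : G.girth = 2 * d + 1)
    (e : G.edgeSet) (i : ℕ) (hi1 : 1 ≤ i) (hid : i ≤ d) :
    {v : V | G.subdivision.dist (inr e) (inl v) = 2 * i - 1}.ncard
      = 2 * (k - 1) ^ (i - 1) := by
  classical
  obtain ⟨e, hxy⟩ := e
  induction e using Sym2.ind with | h x y => ?_
  replace hxy : G.Adj x y := hxy
  have hsphere : {v : V | G.subdivision.dist (inr ⟨s(x, y), hxy⟩) (inl v) = 2 * i - 1} =
      ↑({v | min (G.dist x v) (G.dist y v) = i - 1} : Finset V) := by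
    ext v
    rw [Set.mem_ofPred, Finset.mem_coe, Finset.mem_filter_univ, subdivision_dist_inr_inl hconn hxy]
    omega
  rw [hsphere, Set.ncard_coe_finset, card_filter_min_dist_eq hconn hreg hxy (by omega)]

theorem subdivision_sphere_card [Fintype V] (G : SimpleGraph V) [DecidableRel G.Adj]
    (hconn : G.Connected) (k d : ℕ) (hk : 3 ≤ k) (hd : 2 ≤ d)
    (hreg : G.IsRegularOfDegree k) (hdiam : G.diam = d) (hgirth : G.girth = 2 * d + 1)
    (e : G.edgeSet) (i : ℕ) (hi1 : 1 ≤ i) (hid : i ≤ d) :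
    {v : V | G.subdivision.dist (inr e) (inl v) = 2 * i - 1}.ncard
      = 2 * (k - 1) ^ (i - 1) :=
  subdivision_sphere_card_general G hconn k d hreg hgirth e i hi1 hid
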